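/- Let g : ℝ × ℝ → ℝ be defined by g(x,y) = x − y + 1/2 (with ℝ carrying the usual topology). Then the set A = (0, ∞) is g-closed (every sequence in A that g-converges to a point x ∈ ℝ has x ∈ A; indeed any such limit x satisfies x ≥ 1/2), although A is not closed in ℝ with respect to the usual topology. -/

import Mathlib

/-!
A sequence `g₁₁`-converges to `p` exactly when it converges to `p - 1/2` in the usual sense,
since `g₁₁ (x n) p = x n - (p - 1/2)`. A usual limit of positive numbers is nonnegative, so a
`g₁₁`-limit of positive numbers is at least `1/2`: the boundary point `0` that keeps `(0, ∞)`
from being closed is never a `g₁₁`-limit.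
-/

open Filter Topology

/-- A sequence `x` `g`-converges to `p` if `|g (x n) p| → 0`. -/
def GConv {X : Type*} (g : X → X → ℝ) (x : ℕ → X) (p : X) : Prop :=
  Tendsto (fun n => |g (x n) p|) atTop (𝓝 0)

/-- A subset `S` is `g`-closed if every sequence in `S` which `g`-converges
to a point has its limit in `S`. -/
def GClosed {X : Type*} (g : X → X → ℝ) (S : Set X) : Prop :=
  ∀ x : ℕ → X, (∀ n, x n ∈ S) → ∀ p : X, GConv g x p → p ∈ S

/-- `g(x,y) = x - y + 1/2` on `ℝ × ℝ`. -/
noncomputable def g11 : ℝ → ℝ → ℝ := fun x y => x - y + 1 / 2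

theorem gConv_sub_add_const_iff (c : ℝ) (x : ℕ → ℝ) (p : ℝ) :
    GConv (fun a b => a - b + c) x p ↔ Tendsto x atTop (𝓝 (p - c)) := by
  rw [tendsto_iff_norm_sub_tendsto_zero, GConv]
  simp only [Real.norm_eq_abs, sub_sub_eq_add_sub, add_sub_right_comm]

theorem one_half_le_of_gConv_g11 {x : ℕ → ℝ} (hx : ∀ n, 0 < x n) {p : ℝ}
    (hp : GConv g11 x p) : 1 / 2 ≤ p := by
  have hlim : Tendsto x atTop (𝓝 (p - 1 / 2)) := (gConv_sub_add_const_iff _ x p).1 hp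
  linarith [ge_of_tendsto' hlim fun n => (hx n).le]

theorem not_isClosed_Ioi {α : Type*} [TopologicalSpace α] [LinearOrder α] [OrderTopology α]
    [DenselyOrdered α] [NoMaxOrder α] (a : α) : ¬ IsClosed (Set.Ioi a) := by
  intro h
  have ha : a ∈ closure (Set.Ioi a) := closure_Ioi a ▸ Set.self_mem_Ici
  exact Set.self_notMem_Ioi (h.closure_eq ▸ ha)

theorem stmt_11 :
    (∀ x : ℕ → ℝ, (∀ n, x n ∈ Set.Ioi (0 : ℝ)) →
      ∀ p : ℝ, GConv g11 x p → (1 / 2 ≤ p ∧ p ∈ Set.Ioi (0 : ℝ))) ∧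
    GClosed g11 (Set.Ioi (0 : ℝ)) ∧
    ¬ IsClosed (Set.Ioi (0 : ℝ)) := by
  have limit_ge : ∀ x : ℕ → ℝ, (∀ n, x n ∈ Set.Ioi (0 : ℝ)) →
      ∀ p : ℝ, GConv g11 x p → (1 / 2 ≤ p ∧ p ∈ Set.Ioi (0 : ℝ)) := by
    intro x hx p hp
    have hp' : 1 / 2 ≤ p := one_half_le_of_gConv_g11 hx hp
    exact ⟨hp', show (0 : ℝ) < p by linarith⟩
  exact ⟨limit_ge, fun x hx p hp => (limit_ge x hx p hp).2, not_isClosed_Ioi 0⟩
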